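/- Let F, H : F_{p^n} → F_{p^s} be c-CCZ equivalent, i.e., there is a bijective F_p-linear map φ on F_{p^n} × F_{p^s} with φ(cX) = cφ(X) for all X, and a point X₀, such that the graph of F equals φ(graph of H) + X₀. Then F and H have the same cc-differential spectrum and the same cc-differential uniformity. -/

import Mathlib

/-!
`Δ_F(a, b)` counts the points `P` of the graph `G_F` with `γ * P + (a, b) ∈ G_F`, where `γ` is `c`
acting coordinatewise. The affine injection `T X = φ X + X₀` maps `G_H` onto `G_F` and conjugates
`X ↦ γ * X + u` into `X ↦ γ * X + ψ u` with `ψ u = φ u + X₀ - γ * X₀`, so `Δ_F ∘ ψ = Δ_H`; as `ψ`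
is a bijection the spectra agree. For `c = 1` we have `ψ = φ`, which permutes the nonzero `(a, b)`;
replacing the condition `a ≠ 0` by `(a, b) ≠ 0` only adds the entries `Δ(0, b) = 0`, which do not
change the supremum.
-/

open Function Set

theorem Nat.sSup_insert_zero (s : Set ℕ) : sSup (insert 0 s) = sSup s := by
  by_cases hs : BddAbove s
  · rw [csSup_insert' hs, zero_max]
  · rw [Nat.sSup_of_not_bddAbove hs, Nat.sSup_of_not_bddAbove (by rwa [bddAbove_insert])]

theorem Function.Semiconj.image_inter_preimage_image {α β : Type*} {T : α → β} {f : α → α}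
    {g : β → β} (h : Semiconj T f g) (hT : Injective T) (A : Set α) :
    T '' A ∩ g ⁻¹' (T '' A) = T '' (A ∩ f ⁻¹' A) := by
  rw [← image_inter_preimage, ← preimage_comp, ← h.comp_eq, preimage_comp,
    preimage_image_eq _ hT]

theorem Function.setOf_snd_eq_graph {α β : Type*} (f : α → β) :
    {P : α × β | P.2 = f P.1} = f.graph :=
  Set.ext fun _ => eq_comm

section
variable {K L : Type*} [Ring K] [Ring L]

/-- `c` acts on `K × L` as multiplication by `γ = (ι c, κ c)` in the product ring. -/
noncomputable def ccDiffCount (γ : K × L) (F : K → L) (u : K × L) : ℕ :=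
  Nat.card {x : K // F (γ.1 * x + u.1) - γ.2 * F x = u.2}

theorem ccDiffCount_eq_ncard_graph (γ : K × L) (F : K → L) (u : K × L) :
    ccDiffCount γ F u = (F.graph ∩ (fun P => γ * P + u) ⁻¹' F.graph).ncard := by
  have hsolutions : F.graph ∩ (fun P => γ * P + u) ⁻¹' F.graph =
      (fun x => (x, F x)) '' {x | F (γ.1 * x + u.1) - γ.2 * F x = u.2} := by
    ext ⟨x, y⟩
    simp only [graph, mem_inter_iff, mem_preimage, mem_ofPred_eq, mem_image, Prod.fst_add,
      Prod.fst_mul, Prod.snd_add, Prod.snd_mul, Prod.mk.injEq, sub_eq_iff_eq_add']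
    constructor
    · rintro ⟨rfl, h⟩
      exact ⟨x, h, rfl, rfl⟩
    · rintro ⟨x, h, rfl, rfl⟩
      exact ⟨rfl, h⟩
  rw [hsolutions, ncard_image_of_injective _ fun x y h => congrArg Prod.fst h,
    ← Nat.card_coe_set_eq]
  rfl

theorem semiconj_add_const_mul_add (γ : K × L) (φ : K × L →+ K × L)
    (hφ : ∀ X, φ (γ * X) = γ * φ X) (X₀ u : K × L) :
    Semiconj (fun X => φ X + X₀) (fun Q => γ * Q + u) (fun P => γ * P + (φ u + X₀ - γ * X₀)) := by
  intro Q
  simp only [map_add, hφ, mul_add]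
  abel

variable {γ : K × L} {F H : K → L} {φ : K × L →+ K × L} {X₀ : K × L}

theorem ccDiffCount_of_graph_eq_image (hφ : Injective φ) (hγ : ∀ X, φ (γ * X) = γ * φ X)
    (hgraph : F.graph = (fun X => φ X + X₀) '' H.graph) (u : K × L) :
    ccDiffCount γ F (φ u + X₀ - γ * X₀) = ccDiffCount γ H u := by
  have hT : Injective fun X => φ X + X₀ := (add_left_injective X₀).comp hφ
  rw [ccDiffCount_eq_ncard_graph, ccDiffCount_eq_ncard_graph, hgraph,
    (semiconj_add_const_mul_add γ φ hγ X₀ u).image_inter_preimage_image hT,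
    ncard_image_of_injective _ hT]

theorem range_ccDiffCount_eq (hφ : Bijective φ) (hγ : ∀ X, φ (γ * X) = γ * φ X)
    (hgraph : F.graph = (fun X => φ X + X₀) '' H.graph) :
    range (ccDiffCount γ F) = range (ccDiffCount γ H) := by
  have hψ : Surjective fun u => φ u + X₀ - γ * X₀ := fun v => by
    obtain ⟨u, hu⟩ := hφ.2 (v - X₀ + γ * X₀)
    exact ⟨u, by dsimp only; rw [hu]; abel⟩
  rw [← hψ.range_comp]
  exact congrArg range (funext (ccDiffCount_of_graph_eq_image hφ.1 hγ hgraph))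

theorem ccDiffCount_one_zero_left {b : L} (hb : b ≠ 0) (F : K → L) :
    ccDiffCount 1 F ((0 : K), b) = 0 :=
  Nat.card_eq_zero.2 <| .inl ⟨fun x => hb <| by simpa using x.2.symm⟩

theorem insert_zero_image_ccDiffCount_one (F : K → L) :
    insert 0 (ccDiffCount 1 F '' {u | u.1 ≠ 0}) = insert 0 (ccDiffCount 1 F '' {0}ᶜ) := by
  have hsub : {u : K × L | u.1 ≠ 0} ⊆ {0}ᶜ := fun u hu h0 => hu (congrArg Prod.fst h0)
  refine (insert_subset_insert (image_mono hsub)).antisymm ?_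
  rintro m (rfl | ⟨⟨a, b⟩, hab, rfl⟩)
  · exact mem_insert 0 _
  by_cases ha : a = 0
  · subst ha
    exact .inl (ccDiffCount_one_zero_left (fun hb => hab (by rw [hb]; rfl)) F)
  · exact .inr ⟨(a, b), ha, rfl⟩

theorem image_ccDiffCount_one_compl_zero_eq (hφ : Bijective φ)
    (hgraph : F.graph = (fun X => φ X + X₀) '' H.graph) :
    ccDiffCount 1 F '' {0}ᶜ = ccDiffCount 1 H '' {0}ᶜ := by
  have hcompl : φ '' {0}ᶜ = {0}ᶜ := by rw [image_compl_eq hφ, image_singleton, map_zero]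
  conv_lhs => rw [← hcompl, ← image_comp]
  refine image_congr fun u _ => ?_
  simpa using
    ccDiffCount_of_graph_eq_image (γ := 1) hφ.1 (fun X => by rw [one_mul, one_mul]) hgraph u

theorem sSup_ccDiffCount_one_eq (hφ : Bijective φ)
    (hgraph : F.graph = (fun X => φ X + X₀) '' H.graph) :
    sSup (ccDiffCount 1 F '' {u | u.1 ≠ 0}) = sSup (ccDiffCount 1 H '' {u | u.1 ≠ 0}) := by
  rw [← Nat.sSup_insert_zero, insert_zero_image_ccDiffCount_one,
    image_ccDiffCount_one_compl_zero_eq hφ hgraph, ← insert_zero_image_ccDiffCount_one,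
    Nat.sSup_insert_zero]

end

theorem cCCZ_preserves_cc_spectrum_general
    (K L F0 : Type) [Field K] [Field L] [Field F0]
    (ι : F0 →+* K) (κ : F0 →+* L) (c : F0)
    (F H : K → L)
    (φ : K × L → K × L) (hφbij : Function.Bijective φ)
    (hφadd : ∀ X Y : K × L, φ (X + Y) = φ X + φ Y)
    (hφc : ∀ X : K × L, φ (ι c * X.1, κ c * X.2) = (ι c * (φ X).1, κ c * (φ X).2))
    (X₀ : K × L)
    (hgraph : {P : K × L | P.2 = F P.1} = (fun X => φ X + X₀) '' {P : K × L | P.2 = H P.1}) :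
    ({m : ℕ | ∃ (a : K) (b : L),
        m = Nat.card {x : K // F (ι c * x + a) - κ c * F x = b}} =
     {m : ℕ | ∃ (a : K) (b : L),
        m = Nat.card {x : K // H (ι c * x + a) - κ c * H x = b}}) ∧
    sSup {m : ℕ | ∃ (a : K) (b : L), (c = 1 → a ≠ 0) ∧
        m = Nat.card {x : K // F (ι c * x + a) - κ c * F x = b}} =
    sSup {m : ℕ | ∃ (a : K) (b : L), (c = 1 → a ≠ 0) ∧
        m = Nat.card {x : K // H (ι c * x + a) - κ c * H x = b}} := by
  let φ' : K × L →+ K × L := AddMonoidHom.mk' φ hφadd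
  have hgraph' : F.graph = (fun X => φ' X + X₀) '' H.graph := by
    rwa [setOf_snd_eq_graph, setOf_snd_eq_graph] at hgraph
  have hspectrum (G : K → L) : {m : ℕ | ∃ (a : K) (b : L),
      m = Nat.card {x : K // G (ι c * x + a) - κ c * G x = b}} =
      range (ccDiffCount (ι c, κ c) G) := by
    ext m
    simp [ccDiffCount, eq_comm]
  have hrange := range_ccDiffCount_eq (γ := (ι c, κ c)) hφbij hφc hgraph'
  refine ⟨by rw [hspectrum, hspectrum, hrange], ?_⟩
  by_cases hc1 : c = 1
  · subst hc1
    have huniformity (G : K → L) : {m : ℕ | ∃ (a : K) (b : L), ((1 : F0) = 1 → a ≠ 0) ∧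
        m = Nat.card {x : K // G (ι 1 * x + a) - κ 1 * G x = b}} =
        ccDiffCount 1 G '' {u | u.1 ≠ 0} := by
      ext m
      simp [ccDiffCount, eq_comm]
    rw [huniformity, huniformity, sSup_ccDiffCount_one_eq hφbij hgraph']
  · simp only [hc1, false_imp_iff, true_and]
    rw [hspectrum, hspectrum, hrange]

/-- c-CCZ equivalent functions have the same cc-differential spectrum and
the same cc-differential uniformity. -/
theorem cCCZ_preserves_cc_spectrum (p n s : ℕ) (hp : p.Prime) (hn : 0 < n) (hs : 0 < s)
    (K L F0 : Type) [Field K] [Fintype K] [Field L] [Fintype L] [Field F0] [Fintype F0]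
    (hK : Fintype.card K = p ^ n) (hL : Fintype.card L = p ^ s)
    (hF0 : Fintype.card F0 = p ^ (Nat.gcd n s))
    (ι : F0 →+* K) (κ : F0 →+* L) (c : F0) (hc : c ≠ 0)
    (F H : K → L)
    (φ : K × L → K × L) (hφbij : Function.Bijective φ)
    (hφadd : ∀ X Y : K × L, φ (X + Y) = φ X + φ Y)
    (hφc : ∀ X : K × L, φ (ι c * X.1, κ c * X.2) = (ι c * (φ X).1, κ c * (φ X).2))
    (X₀ : K × L)
    (hgraph : {P : K × L | P.2 = F P.1} = (fun X => φ X + X₀) '' {P : K × L | P.2 = H P.1}) :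
    ({m : ℕ | ∃ (a : K) (b : L),
        m = Nat.card {x : K // F (ι c * x + a) - κ c * F x = b}} =
     {m : ℕ | ∃ (a : K) (b : L),
        m = Nat.card {x : K // H (ι c * x + a) - κ c * H x = b}}) ∧
    sSup {m : ℕ | ∃ (a : K) (b : L), (c = 1 → a ≠ 0) ∧
        m = Nat.card {x : K // F (ι c * x + a) - κ c * F x = b}} =
    sSup {m : ℕ | ∃ (a : K) (b : L), (c = 1 → a ≠ 0) ∧
        m = Nat.card {x : K // H (ι c * x + a) - κ c * H x = b}} :=
  cCCZ_preserves_cc_spectrum_general K L F0 ι κ c F H φ hφbij hφadd hφc X₀ hgraph
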